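/- arXiv:2512.23149 — 5 statements merged into one kernel-verified Lean document; each statement's English description precedes it below -/
import Mathlib

section
/- Every sequence of weighted graphs (G_n ∈ Δ^{n×n})_{n∈ℕ} has a quotient-convergent subsequence: there exists a strictly increasing sequence of indices n_1 < n_2 < … such that for every k ∈ ℕ the laws of the random quotients ρ(F_{k,n_m})G_{n_m} converge weakly as m → ∞. -/
open MeasureTheory Filter Topology BoundedContinuousFunction
open scoped ENNReal NNReal

noncomputable section

/-- `G ∈ Δ^{n×n}`: nonnegative entries summing to one. -/
def IsWeightedGraph {n : ℕ} (G : Fin n → Fin n → ℝ) : Prop :=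
  (∀ i j, 0 ≤ G i j) ∧ (∑ i, ∑ j, G i j) = 1

/-- The quotient `ρ(f)G`. -/
def quotGraph {n k : ℕ} (f : Fin n → Fin k) (G : Fin n → Fin n → ℝ) :
    Fin k → Fin k → ℝ :=
  fun i j => ∑ u, ∑ v, if f u = i ∧ f v = j then G u v else 0

/-- The law of the random quotient `ρ(F_{k,n})G`. -/
noncomputable def quotientLaw {n : ℕ} (G : Fin n → Fin n → ℝ) (k : ℕ) :
    Measure (Fin k → Fin k → ℝ) :=
  ((k : ℝ≥0∞) ^ n)⁻¹ • ∑ f : Fin n → Fin k, Measure.dirac (quotGraph f G)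

/-- Quotient convergence of a sequence of graphs of sizes `N m`. -/
def QuotientConverges {N : ℕ → ℕ} (G : ∀ m : ℕ, Fin (N m) → Fin (N m) → ℝ) : Prop :=
  ∀ k : ℕ, 1 ≤ k → ∃ ν : Measure (Fin k → Fin k → ℝ), IsProbabilityMeasure ν ∧
    ∀ f : (Fin k → Fin k → ℝ) →ᵇ ℝ,
      Tendsto (fun m => ∫ x, f x ∂(quotientLaw (G m) k)) atTop (𝓝 (∫ x, f x ∂ν))

def homNum {k n : ℕ} (H : Fin k → Fin k → ℕ) (G : Fin n → Fin n → ℝ) : ℝ :=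
  ∑ f : Fin k → Fin n, ∏ i, ∏ j, G (f i) (f j) ^ H i j

def quotDensity {k n : ℕ} (H : Fin k → Fin k → ℕ) (G : Fin n → Fin n → ℝ) : ℝ :=
  ((k : ℝ) ^ n)⁻¹ * ∑ f : Fin n → Fin k, ∏ i, ∏ j, quotGraph f G i j ^ H i j

def IsMultigraph {k : ℕ} (H : Fin k → Fin k → ℕ) : Prop :=
  ∀ i, ∃ j, 0 < H i j ∨ 0 < H j i

/-! All quotients of a graph in `Δ^{n×n}` lie in the compact cube `[0,1]^{k×k}`, so the law of
the random `k`-quotient is a point of the space of probability measures on that cube, which is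
compact (Prokhorov) and metrizable (Lévy–Prokhorov). The countable product over `k` of these
spaces is again compact and metrizable, hence sequentially compact: one subsequence makes the
laws converge for every `k` at once. -/

theorem MeasureTheory.ProbabilityMeasure.exists_subseq_tendsto_pi {ι : Type*} [Countable ι]
    {X : ι → Type*}
    [∀ k, TopologicalSpace (X k)] [∀ k, CompactSpace (X k)]
    [∀ k, TopologicalSpace.MetrizableSpace (X k)] [∀ k, TopologicalSpace.SeparableSpace (X k)]
    [∀ k, MeasurableSpace (X k)] [∀ k, BorelSpace (X k)]
    (μ : ℕ → ∀ k, ProbabilityMeasure (X k)) :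
    ∃ (ν : ∀ k, ProbabilityMeasure (X k)) (φ : ℕ → ℕ), StrictMono φ ∧
      ∀ k, Tendsto (fun m => μ (φ m) k) atTop (𝓝 (ν k)) := by
  obtain ⟨ν, φ, hφ, h⟩ := SeqCompactSpace.tendsto_subseq μ
  exact ⟨ν, φ, hφ, tendsto_pi_nhds.mp h⟩

abbrev UnitCube (k : ℕ) : Type := Fin k → Fin k → Set.Icc (0 : ℝ) 1

def UnitCube.val {k : ℕ} (x : UnitCube k) : Fin k → Fin k → ℝ := fun i j => x i j

lemma UnitCube.continuous_val (k : ℕ) : Continuous (UnitCube.val (k := k)) := by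
  unfold UnitCube.val
  fun_prop

lemma quotGraph_mem_Icc {n k : ℕ} {G : Fin n → Fin n → ℝ} (hG : IsWeightedGraph G)
    (f : Fin n → Fin k) (i j : Fin k) : quotGraph f G i j ∈ Set.Icc (0 : ℝ) 1 := by
  obtain ⟨hpos, hsum⟩ := hG
  refine ⟨Finset.sum_nonneg fun u _ => Finset.sum_nonneg fun v _ => ?_, hsum ▸ ?_⟩
  · split_ifs <;> simp [hpos u v]
  · exact Finset.sum_le_sum fun u _ => Finset.sum_le_sum fun v _ => by
      split_ifs <;> simp [hpos u v]

def cubeQuotGraph {n k : ℕ} {G : Fin n → Fin n → ℝ} (hG : IsWeightedGraph G)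
    (f : Fin n → Fin k) : UnitCube k :=
  fun i j => ⟨quotGraph f G i j, quotGraph_mem_Icc hG f i j⟩

def cubeQuotientLaw {n : ℕ} {G : Fin n → Fin n → ℝ} (hG : IsWeightedGraph G) (k : ℕ) :
    Measure (UnitCube k) :=
  ((k : ℝ≥0∞) ^ n)⁻¹ • ∑ f : Fin n → Fin k, Measure.dirac (cubeQuotGraph hG f)

lemma map_val_cubeQuotientLaw {n : ℕ} {G : Fin n → Fin n → ℝ} (hG : IsWeightedGraph G)
    (k : ℕ) : (cubeQuotientLaw hG k).map UnitCube.val = quotientLaw G k := by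
  rw [cubeQuotientLaw, Measure.map_smul,
    Measure.map_finset_sum (UnitCube.continuous_val k).measurable.aemeasurable]
  simp only [Measure.map_dirac]
  rfl

instance isProbabilityMeasure_cubeQuotientLaw {n k : ℕ} [NeZero k] {G : Fin n → Fin n → ℝ}
    (hG : IsWeightedGraph G) : IsProbabilityMeasure (cubeQuotientLaw hG k) := by
  constructor
  simp only [cubeQuotientLaw, Measure.smul_apply, Measure.coe_finsetSum, Finset.sum_apply,
    measure_univ, Finset.sum_const, Finset.card_univ, Fintype.card_fun, Fintype.card_fin,
    nsmul_eq_mul, mul_one, smul_eq_mul, Nat.cast_pow]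
  exact ENNReal.inv_mul_cancel (pow_ne_zero _ (Nat.cast_ne_zero.mpr (NeZero.ne k)))
    (ENNReal.pow_ne_top (ENNReal.natCast_ne_top k))

/-- every sequence of weighted graphs has a quotient-convergent
subsequence. -/
theorem stmt1 (G : ∀ n : ℕ, Fin (n + 1) → Fin (n + 1) → ℝ)
    (hG : ∀ n, IsWeightedGraph (G n)) :
    ∃ φ : ℕ → ℕ, StrictMono φ ∧ QuotientConverges (fun m => G (φ m)) := by
  obtain ⟨ν, φ, hφ, hν⟩ := ProbabilityMeasure.exists_subseq_tendsto_pi fun n k =>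
    (⟨cubeQuotientLaw (hG n) (k + 1), inferInstance⟩ : ProbabilityMeasure (UnitCube (k + 1)))
  refine ⟨φ, hφ, fun k hk => ?_⟩
  obtain ⟨k, rfl⟩ := Nat.exists_eq_add_of_le' hk
  have hval := UnitCube.continuous_val (k + 1)
  have hlim := ProbabilityMeasure.tendsto_map_of_tendsto_of_continuous _ _ (hν k) hval
  refine ⟨_, ((ν k).map hval.measurable.aemeasurable).prop, fun F => ?_⟩
  refine (ProbabilityMeasure.tendsto_iff_forall_integral_tendsto.mp hlim F).congr fun m => ?_
  exact congrArg (fun μ => ∫ x, F x ∂μ) (map_val_cubeQuotientLaw (hG (φ m)) (k + 1))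
end
end

section
/- For every fixed k ∈ ℕ, the laws of the random quotients ρ(F_{k,n})(n^{−2}𝟙_{n×n}) of the normalized complete graphs converge weakly, as n → ∞, to the point mass at the deterministic matrix k^{−2}𝟙_{k×k}, where 𝟙_{m×m} denotes the m×m all-ones matrix. In particular, the sequence (n^{−2}𝟙_{n×n} ∈ Δ^{n×n})_n quotient-converges. -/
open MeasureTheory Filter Topology BoundedContinuousFunction
open scoped ENNReal NNReal

noncomputable section

/-! The quotient of the constant graph `N⁻² 𝟙` along `f : [N] → [k]` is the rank-one matrix
`p pᵀ`, where `p i = |f⁻¹(i)| / N` is the empirical distribution of `f`. For uniform `f` each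
`|f⁻¹(i)|` is binomial with parameters `N` and `1/k`, so `E ∑ᵢ (p i - 1/k)² = (1 - 1/k) / N`.
Hence `ρ(f)G` converges in mean square to `k⁻² 𝟙`, and mean-square convergence to a point implies
weak convergence to the point mass (split a bounded continuous test function into the region
where it is close to its value at the point and a Chebyshev tail). -/

open Finset

lemma BoundedContinuousFunction.exists_abs_sub_le_add_mul_dist_sq {E : Type*}
    [PseudoMetricSpace E] (F : E →ᵇ ℝ) (a : E) {ε : ℝ} (hε : 0 < ε) :
    ∃ C, ∀ x, |F x - F a| ≤ ε + C * dist x a ^ 2 := by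
  obtain ⟨δ, hδ, hF⟩ := Metric.continuousAt_iff.1 (F.continuous.continuousAt (x := a)) ε hε
  refine ⟨2 * ‖F‖ / δ ^ 2, fun x => ?_⟩
  have hC : 0 ≤ 2 * ‖F‖ / δ ^ 2 * dist x a ^ 2 := by positivity
  rcases lt_or_ge (dist x a) δ with hx | hx
  · have := hF hx
    rw [Real.dist_eq] at this
    linarith
  · calc |F x - F a| ≤ 2 * ‖F‖ := by simpa [Real.dist_eq] using F.dist_le_two_norm x a
      _ = 2 * ‖F‖ / δ ^ 2 * δ ^ 2 := by field_simp
      _ ≤ 2 * ‖F‖ / δ ^ 2 * dist x a ^ 2 := by gcongr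
      _ ≤ ε + 2 * ‖F‖ / δ ^ 2 * dist x a ^ 2 := by linarith

theorem tendsto_integral_of_tendsto_integral_dist_sq {ι E : Type*} [PseudoMetricSpace E]
    [MeasurableSpace E] [OpensMeasurableSpace E] {l : Filter ι} {μ : ι → Measure E}
    [∀ i, IsProbabilityMeasure (μ i)] {a : E}
    (hint : ∀ i, Integrable (fun x => dist x a ^ 2) (μ i))
    (hlim : Tendsto (fun i => ∫ x, dist x a ^ 2 ∂μ i) l (𝓝 0)) (F : E →ᵇ ℝ) :
    Tendsto (fun i => ∫ x, F x ∂μ i) l (𝓝 (F a)) := by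
  rw [Metric.tendsto_nhds]
  intro ε hε
  obtain ⟨C, hC⟩ := F.exists_abs_sub_le_add_mul_dist_sq a (half_pos hε)
  have hsmall : ∀ᶠ i in l, C * ∫ x, dist x a ^ 2 ∂μ i < ε / 2 :=
    (hlim.const_mul C).eventually_lt_const (by simpa using half_pos hε)
  filter_upwards [hsmall] with i hi
  have hbound : |∫ x, F x ∂μ i - F a| ≤ ε / 2 + C * ∫ x, dist x a ^ 2 ∂μ i :=
    calc |∫ x, F x ∂μ i - F a| = ‖∫ x, (F x - F a) ∂μ i‖ := by
          rw [integral_sub (F.integrable _) (integrable_const _), integral_const, probReal_univ,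
            one_smul, Real.norm_eq_abs]
      _ ≤ ∫ x, (ε / 2 + C * dist x a ^ 2) ∂μ i :=
          norm_integral_le_of_norm_le ((integrable_const _).add ((hint i).const_mul C))
            (Eventually.of_forall hC)
      _ = ε / 2 + C * ∫ x, dist x a ^ 2 ∂μ i := by
          rw [integral_add (integrable_const _) ((hint i).const_mul C), integral_const,
            integral_const_mul, probReal_univ, one_smul]
  rw [Real.dist_eq]
  linarith

lemma abs_mul_sub_mul_le_add {x y a b : ℝ} (hy : |y| ≤ 1) (ha : |a| ≤ 1) :
    |x * y - a * b| ≤ |x - a| + |y - b| :=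
  calc |x * y - a * b| = |(x - a) * y + a * (y - b)| := by ring_nf
    _ ≤ |x - a| * |y| + |a| * |y - b| := by
      rw [← abs_mul, ← abs_mul]; exact abs_add_le _ _
    _ ≤ |x - a| + |y - b| := by
      gcongr
      · exact mul_le_of_le_one_right (abs_nonneg _) hy
      · exact mul_le_of_le_one_left (abs_nonneg _) ha

section FiberCounting

open Fintype (card)

variable {α β : Type*} [Fintype α] [DecidableEq α] [Fintype β] [DecidableEq β]

lemma card_mul_card_filter_apply_eq_apply {u v : α} (huv : u ≠ v) :
    card β * #{f : α → β | f u = f v} = card β ^ card α := by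
  -- overwriting the value at `v` splits off one free coordinate
  let e : (α → β) ≃ {f : α → β // f u = f v} × β :=
    { toFun g := (⟨Function.update g v (g u), by simp [huv]⟩, g v)
      invFun p := Function.update p.1.1 v p.2
      left_inv g := by simp
      right_inv := by
        rintro ⟨⟨f, hf⟩, b⟩
        simp [huv, hf] }
  rw [← Fintype.card_fun, Fintype.card_congr e, Fintype.card_prod, Fintype.card_subtype,
    mul_comm]

omit [DecidableEq α] in
lemma sum_card_fiber (f : α → β) : ∑ b, #{a | f a = b} = card α := by
  simp [sum_card_fiberwise_eq_card_filter]

lemma sum_card_filter_apply_eq_apply (u : α) :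
    ∑ f : α → β, #{v | f v = f u} = ∑ v, #{f : α → β | f v = f u} := by
  simp only [card_eq_sum_ones, sum_filter]
  exact sum_comm

omit [DecidableEq α] in
lemma sum_sq_card_fiber (f : α → β) :
    ∑ b, #{a | f a = b} ^ 2 = ∑ u, #{v | f v = f u} := by
  rw [← sum_fiberwise' univ f fun b => #{v | f v = b}]
  simp [sq]

lemma card_mul_sum_card_filter_apply_eq_apply_add (u : α) :
    card β * ∑ v, #{f : α → β | f v = f u} + card β ^ card α =
      card β ^ card α * (card β + card α) := by
  have hoff : ∀ v ∈ univ.erase u, card β * #{f : α → β | f v = f u} = card β ^ card α :=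
    fun v hv => card_mul_card_filter_apply_eq_apply (ne_of_mem_erase hv)
  rw [← add_sum_erase _ _ (mem_univ u), mul_add, mul_sum, sum_congr rfl hoff, sum_const,
    card_erase_of_mem (mem_univ u), card_univ]
  simp only [filter_true, card_univ, Fintype.card_fun, smul_eq_mul]
  generalize card β ^ card α = K
  obtain ⟨m, hm⟩ := Nat.exists_eq_succ_of_ne_zero (Fintype.card_pos_iff.2 ⟨u⟩).ne'
  rw [hm, Nat.succ_sub_one, Nat.succ_eq_add_one]
  ring

lemma card_mul_sum_sum_sq_card_fiber_add :
    card β * ∑ f : α → β, ∑ b, #{a | f a = b} ^ 2 + card α * card β ^ card α =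
      card α * card β ^ card α * (card β + card α) := by
  simp_rw [sum_sq_card_fiber]
  rw [sum_comm, mul_sum]
  simp_rw [sum_card_filter_apply_eq_apply]
  calc _ = ∑ u : α, (card β * ∑ v, #{f : α → β | f v = f u} + card β ^ card α) := by
        rw [sum_add_distrib, sum_const, card_univ, smul_eq_mul]
    _ = _ := by
      rw [sum_congr rfl fun u _ => card_mul_sum_card_filter_apply_eq_apply_add u, sum_const,
        card_univ, smul_eq_mul, mul_assoc]

omit [DecidableEq α] in
lemma sum_sq_card_fiber_div_sub [Nonempty α] [Nonempty β] (f : α → β) :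
    ∑ b, ((#{a | f a = b} : ℝ) / card α - 1 / card β) ^ 2 =
      (∑ b, (#{a | f a = b} : ℝ) ^ 2) / card α ^ 2 - 1 / card β := by
  have hα : (card α : ℝ) ≠ 0 := Nat.cast_ne_zero.2 Fintype.card_ne_zero
  have hβ : (card β : ℝ) ≠ 0 := Nat.cast_ne_zero.2 Fintype.card_ne_zero
  have hsum : ∑ b, (#{a | f a = b} : ℝ) = card α := by exact_mod_cast sum_card_fiber f
  simp only [sub_sq, sum_add_distrib, sum_sub_distrib, div_pow, ← sum_div, mul_div_assoc,
    ← mul_sum, ← sum_mul, hsum, sum_const, card_univ, nsmul_eq_mul]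
  field_simp
  ring

lemma sum_sum_sq_card_fiber_div_sub [Nonempty α] [Nonempty β] :
    ∑ f : α → β, ∑ b, ((#{a | f a = b} : ℝ) / card α - 1 / card β) ^ 2 =
      (card β : ℝ) ^ card α / card α * (1 - 1 / card β) := by
  have hcount : (card β : ℝ) * ∑ f : α → β, ∑ b, (#{a | f a = b} : ℝ) ^ 2 +
      card α * card β ^ card α = card α * card β ^ card α * (card β + card α) := by
    exact_mod_cast card_mul_sum_sum_sq_card_fiber_add
  have hα : (card α : ℝ) ≠ 0 := Nat.cast_ne_zero.2 Fintype.card_ne_zero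
  have hβ : (card β : ℝ) ≠ 0 := Nat.cast_ne_zero.2 Fintype.card_ne_zero
  simp_rw [sum_sq_card_fiber_div_sub]
  rw [sum_sub_distrib, ← sum_div, sum_const, card_univ, Fintype.card_fun, nsmul_eq_mul,
    Nat.cast_pow]
  field_simp
  linear_combination hcount

end FiberCounting

lemma integrable_quotientLaw {n k : ℕ} (G : Fin n → Fin n → ℝ) (hk : k ≠ 0)
    (g : (Fin k → Fin k → ℝ) → ℝ) : Integrable g (quotientLaw G k) := by
  refine Integrable.smul_measure ?_ (by simp [hk])
  exact integrable_finsetSum_measure.2 fun f _ => integrable_dirac (by simp)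

lemma integral_quotientLaw {n k : ℕ} (G : Fin n → Fin n → ℝ)
    (g : (Fin k → Fin k → ℝ) → ℝ) :
    ∫ x, g x ∂quotientLaw G k = ((k : ℝ) ^ n)⁻¹ * ∑ f : Fin n → Fin k, g (quotGraph f G) := by
  rw [quotientLaw, integral_smul_measure,
    integral_finsetSum_measure fun f _ => integrable_dirac (by simp)]
  simp_rw [integral_dirac]
  rw [ENNReal.toReal_inv, ENNReal.toReal_pow, ENNReal.toReal_natCast, smul_eq_mul]

lemma isProbabilityMeasure_quotientLaw {n k : ℕ} (G : Fin n → Fin n → ℝ) (hk : k ≠ 0) :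
    IsProbabilityMeasure (quotientLaw G k) := by
  constructor
  simp [quotientLaw]
  exact ENNReal.inv_mul_cancel (by simp [hk]) (by simp)

lemma quotGraph_const {n k : ℕ} (f : Fin n → Fin k) (c : ℝ) :
    quotGraph f (fun _ _ => c) = fun i j => #{u | f u = i} * #{v | f v = j} * c := by
  ext i j
  simp [quotGraph, ite_and, ← sum_filter, mul_assoc]

lemma dist_quotGraph_const_sq_le {N k : ℕ} (f : Fin N → Fin k) :
    dist (quotGraph f fun _ _ => 1 / (N : ℝ) ^ 2) (fun _ _ => 1 / (k : ℝ) ^ 2) ^ 2 ≤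
      4 * ∑ b, ((#{a | f a = b} : ℝ) / N - 1 / k) ^ 2 := by
  set p : Fin k → ℝ := fun b => (#{a | f a = b} : ℝ) / N
  set V := ∑ b, (p b - 1 / k) ^ 2
  have hp : ∀ b, |p b| ≤ 1 := fun b => by
    rw [abs_of_nonneg (by positivity)]
    refine div_le_one_of_le₀ ?_ (Nat.cast_nonneg _)
    exact_mod_cast (card_filter_le _ _).trans (by simp)
  have hk : |1 / (k : ℝ)| ≤ 1 := by
    rw [abs_of_nonneg (by positivity), one_div]
    exact Nat.cast_inv_le_one k
  have hV : ∀ b, |p b - 1 / k| ≤ √V := fun b =>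
    Real.abs_le_sqrt (single_le_sum (fun b _ => sq_nonneg (p b - 1 / k)) (mem_univ b))
  have hdist : dist (quotGraph f fun _ _ => 1 / (N : ℝ) ^ 2) (fun _ _ => 1 / (k : ℝ) ^ 2)
      ≤ 2 * √V := by
    refine (dist_pi_le_iff (by positivity)).2 fun i =>
      (dist_pi_le_iff (by positivity)).2 fun j => ?_
    have hQ : quotGraph f (fun _ _ => 1 / (N : ℝ) ^ 2) i j = p i * p j := by
      simp only [quotGraph_const, p]
      ring
    rw [Real.dist_eq, hQ, show 1 / (k : ℝ) ^ 2 = 1 / k * (1 / k) by ring]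
    linarith [abs_mul_sub_mul_le_add (x := p i) (b := 1 / k) (hp j) hk, hV i, hV j]
  calc _ ≤ (2 * √V) ^ 2 := pow_le_pow_left₀ dist_nonneg hdist 2
    _ = 4 * V := by
      rw [mul_pow, Real.sq_sqrt (sum_nonneg fun b _ => sq_nonneg _)]
      ring

lemma tendsto_integral_quotientLaw_complete {k : ℕ} (hk : 1 ≤ k)
    (F : (Fin k → Fin k → ℝ) →ᵇ ℝ) :
    Tendsto (fun n : ℕ =>
        ∫ x, F x ∂(quotientLaw (fun _ _ : Fin (n + 1) => 1 / ((n : ℝ) + 1) ^ 2) k))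
      atTop (𝓝 (F fun _ _ => 1 / (k : ℝ) ^ 2)) := by
  have hk0 : k ≠ 0 := by omega
  have : Nonempty (Fin k) := ⟨⟨0, hk⟩⟩
  have hprob := fun n : ℕ =>
    isProbabilityMeasure_quotientLaw (fun _ _ : Fin (n + 1) => 1 / ((n : ℝ) + 1) ^ 2) hk0
  refine tendsto_integral_of_tendsto_integral_dist_sq
    (fun n => integrable_quotientLaw _ hk0 _) ?_ F
  have hbound : ∀ n : ℕ, ∫ x, dist x (fun _ _ => 1 / (k : ℝ) ^ 2) ^ 2
      ∂(quotientLaw (fun _ _ : Fin (n + 1) => 1 / ((n : ℝ) + 1) ^ 2) k) ≤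
        4 * (1 / ((n : ℝ) + 1)) := by
    intro n
    have hvar := sum_sum_sq_card_fiber_div_sub (α := Fin (n + 1)) (β := Fin k)
    simp only [Fintype.card_fin, Nat.cast_add, Nat.cast_one] at hvar
    rw [integral_quotientLaw]
    calc _ ≤ ((k : ℝ) ^ (n + 1))⁻¹ * ∑ f : Fin (n + 1) → Fin k,
          4 * ∑ b, ((#{a | f a = b} : ℝ) / ((n : ℝ) + 1) - 1 / k) ^ 2 := by
          gcongr with f
          simpa using dist_quotGraph_const_sq_le f
      _ = 4 * (1 / ((n : ℝ) + 1)) * (1 - 1 / k) := by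
          rw [← mul_sum, hvar]
          field_simp
      _ ≤ 4 * (1 / ((n : ℝ) + 1)) := by
          refine mul_le_of_le_one_right (by positivity) ?_
          linarith [show (0 : ℝ) ≤ 1 / k by positivity]
  exact squeeze_zero (fun n => integral_nonneg fun x => sq_nonneg _) hbound
    (by simpa only [mul_zero] using
      tendsto_one_div_add_atTop_nhds_zero_nat.const_mul (4 : ℝ))

/-- the random quotients of the normalized complete graphs converge weakly to
the point mass at `k^{-2}𝟙_{k×k}`; in particular, the normalized complete graphs
quotient-converge. -/
theorem stmt6 (k : ℕ) (hk : 1 ≤ k) :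
    (∀ f : (Fin k → Fin k → ℝ) →ᵇ ℝ,
      Tendsto
        (fun n : ℕ =>
          ∫ x, f x ∂(quotientLaw (fun _ _ : Fin (n + 1) => 1 / ((n : ℝ) + 1) ^ 2) k))
        atTop
        (𝓝 (∫ x, f x ∂(Measure.dirac (fun _ _ : Fin k => 1 / (k : ℝ) ^ 2))))) ∧
    QuotientConverges (fun n => fun _ _ : Fin (n + 1) => 1 / ((n : ℝ) + 1) ^ 2) := by
  refine ⟨fun F => ?_, fun k' hk' =>
    ⟨Measure.dirac fun _ _ => 1 / (k' : ℝ) ^ 2, inferInstance, fun F => ?_⟩⟩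
  · simpa [integral_dirac] using tendsto_integral_quotientLaw_complete hk F
  · simpa [integral_dirac] using tendsto_integral_quotientLaw_complete hk' F
end
end

section
/- Define q₂ : ℝ^{2×2} → ℝ by q₂(A) = (A_{1,1}+A_{1,2}−A_{2,1}−A_{2,2})² + (A_{1,1}+A_{2,1}−A_{1,2}−A_{2,2})². Then for every n ∈ ℕ and every G ∈ Δ^{n×n}, the expectation of q₂(ρ(f)G) over f drawn uniformly at random among all 2^n maps [n] → [2] equals ‖G𝟙‖₂² + ‖G^⊤𝟙‖₂², where 𝟙 is the all-ones vector, i.e., it equals Σ_{i=1}^n (Σ_j G_{i,j})² + Σ_{j=1}^n (Σ_i G_{i,j})². -/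
open MeasureTheory Filter Topology BoundedContinuousFunction
open scoped ENNReal NNReal

noncomputable section

/-- The quadratic `q₂` on `2×2` matrices. -/
def q2 (A : Fin 2 → Fin 2 → ℝ) : ℝ :=
  (A 0 0 + A 0 1 - A 1 0 - A 1 1) ^ 2 + (A 0 0 + A 1 0 - A 0 1 - A 1 1) ^ 2

/-!
Write `spin : Fin 2 → ℝ` for the sign `0 ↦ 1, 1 ↦ -1`. The two squared brackets of `q₂(ρ(f)G)`
are `(∑ᵤ spin (f u) · (G𝟙)ᵤ)²` and `(∑ᵥ spin (f v) · (Gᵀ𝟙)ᵥ)²`. Averaged over a uniform `f`, the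
signs `spin (f u)` are independent and centred, so all cross terms vanish and only the diagonal
`∑ᵤ (G𝟙)ᵤ²`, resp. `∑ᵥ (Gᵀ𝟙)ᵥ²`, survives.
-/

open Finset

def spin : Fin 2 → ℝ := ![1, -1]

@[simp] lemma spin_zero : spin 0 = 1 := rfl

@[simp] lemma spin_one : spin 1 = -1 := rfl

lemma spin_add_one (a : Fin 2) : spin (a + 1) = -spin a := by
  fin_cases a <;> simp [spin]

lemma spin_mul_self (a : Fin 2) : spin a * spin a = 1 := by
  fin_cases a <;> simp [spin]

lemma sum_spin_mul_spin {ι : Type*} [Fintype ι] [DecidableEq ι] (u v : ι) :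
    ∑ f : ι → Fin 2, spin (f u) * spin (f v) = if u = v then 2 ^ Fintype.card ι else 0 := by
  split_ifs with huv
  · simp [huv, spin_mul_self]
  -- flipping the `u`-th coordinate negates every term
  have hflip : ∑ f : ι → Fin 2, spin (f u) * spin (f v) =
      -∑ f : ι → Fin 2, spin (f u) * spin (f v) :=
    calc ∑ f : ι → Fin 2, spin (f u) * spin (f v)
        = ∑ f : ι → Fin 2,
            spin ((f + Pi.single u 1 : ι → Fin 2) u) * spin ((f + Pi.single u 1 : ι → Fin 2) v) :=
          (Equiv.sum_comp (Equiv.addRight (Pi.single u 1))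
            fun f : ι → Fin 2 => spin (f u) * spin (f v)).symm
      _ = ∑ f : ι → Fin 2, -(spin (f u) * spin (f v)) :=
          sum_congr rfl fun f _ => by simp [Ne.symm huv, spin_add_one]
      _ = _ := sum_neg_distrib _
  linarith

lemma sum_sq_sum_spin_mul {ι : Type*} [Fintype ι] [DecidableEq ι] (r : ι → ℝ) :
    ∑ f : ι → Fin 2, (∑ u, spin (f u) * r u) ^ 2 = 2 ^ Fintype.card ι * ∑ u, r u ^ 2 := by
  calc ∑ f : ι → Fin 2, (∑ u, spin (f u) * r u) ^ 2
      = ∑ u, ∑ v, (∑ f : ι → Fin 2, spin (f u) * spin (f v)) * (r u * r v) := by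
        simp_rw [sq, sum_mul_sum, sum_mul, mul_mul_mul_comm]
        rw [sum_comm]
        exact sum_congr rfl fun _ _ => sum_comm
    _ = 2 ^ Fintype.card ι * ∑ u, r u ^ 2 := by
        simp_rw [sum_spin_mul_spin, ite_mul, zero_mul, sum_ite_eq, mem_univ, if_true, mul_sum, sq]

lemma sum_mul_mul_quotGraph {n k : ℕ} (f : Fin n → Fin k) (G : Fin n → Fin n → ℝ)
    (a b : Fin k → ℝ) :
    ∑ i, ∑ j, a i * b j * quotGraph f G i j = ∑ u, ∑ v, a (f u) * b (f v) * G u v := by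
  simp only [quotGraph, mul_sum, mul_ite, mul_zero, ite_and]
  simp_rw [sum_comm (s := univ (α := Fin k)) (t := univ (α := Fin n))]
  simp

lemma q2_quotGraph {n : ℕ} (f : Fin n → Fin 2) (G : Fin n → Fin n → ℝ) :
    q2 (quotGraph f G) =
      (∑ u, spin (f u) * ∑ v, G u v) ^ 2 + (∑ v, spin (f v) * ∑ u, G u v) ^ 2 := by
  have hrow := sum_mul_mul_quotGraph f G spin 1
  have hcol := sum_mul_mul_quotGraph f G 1 spin
  simp only [Fin.sum_univ_two, spin_zero, spin_one, Pi.one_apply, mul_one, one_mul] at hrow hcol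
  rw [sum_comm] at hcol
  simp only [← mul_sum] at hrow hcol
  rw [← hrow, ← hcol, q2]
  ring

theorem stmt15_general (n : ℕ) (G : Fin n → Fin n → ℝ) :
    ((2 : ℝ) ^ n)⁻¹ * ∑ f : Fin n → Fin 2, q2 (quotGraph f G) =
      (∑ i, (∑ j, G i j) ^ 2) + ∑ j, (∑ i, G i j) ^ 2 := by
  simp_rw [q2_quotGraph, sum_add_distrib, sum_sq_sum_spin_mul, Fintype.card_fin]
  field_simp

/-- the expectation of `q₂(ρ(f)G)` over a uniformly random map
`f : [n] → [2]` equals `‖G𝟙‖₂² + ‖Gᵀ𝟙‖₂²`. -/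
theorem stmt15 (n : ℕ) (G : Fin n → Fin n → ℝ) (hG : IsWeightedGraph G) :
    ((2 : ℝ) ^ n)⁻¹ * ∑ f : Fin n → Fin 2, q2 (quotGraph f G) =
      (∑ i, (∑ j, G i j) ^ 2) + ∑ j, (∑ i, G i j) ^ 2 :=
  stmt15_general n G
end
end

section
/- Let (μ_k)_{k≥1} be an equipartition-consistent random graph model, i.e., μ_k is a Borel probability measure on Δ^{k×k} and for all n, k ≥ 1 and every equipartition d : [nk] → [k], the pushforward of μ_{nk} under X ↦ ρ(d)X equals μ_k. Then there exists θ ∈ [0,1] such that for every k ≥ 1, the entrywise mean matrix ∫ X dμ_k(X) equals θ·k^{−2}·𝟙_{k×k} + (1−θ)·k^{−1}·I_k, where 𝟙_{k×k} is the all-ones matrix and I_k the identity matrix. -/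
open MeasureTheory Filter Topology BoundedContinuousFunction
open scoped ENNReal NNReal

noncomputable section

/-- The uniform distribution on the set of all `j^m` maps `[m] → [j]`. -/
def unifMaps (m j : ℕ) : Measure (Fin m → Fin j) :=
  ((j : ℝ≥0∞) ^ m)⁻¹ • ∑ f : Fin m → Fin j, Measure.dirac f

/-- `d : [nk] → [k]` is an equipartition: every fiber has exactly `n` elements. -/
def IsEquipartition {n k : ℕ} (d : Fin (n * k) → Fin k) : Prop :=
  ∀ i : Fin k, (Finset.univ.filter fun u => d u = i).card = n

/-- An equipartition-consistent random graph model. -/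
def EquipartitionConsistentModel (μ : ∀ k : ℕ, Measure (Fin k → Fin k → ℝ)) : Prop :=
  ∀ n k : ℕ, 1 ≤ n → 1 ≤ k → ∀ d : Fin (n * k) → Fin k, IsEquipartition d →
    Measure.map (fun X => quotGraph d X) (μ (n * k)) = μ k

/-!
Taking entrywise means turns the model into a deterministic family `M k` of weighted graphs that
is still consistent under all equipartition quotients. Bijections `[k] → [k]` make `M k`
invariant under simultaneous permutations, so it has one off-diagonal value `a k` and one
diagonal value. The block equipartitions `[n] × [k] → [k]` give `a k = n² a (nk)`, hence
`θ = k² a k` is independent of `k`, and total mass one then forces the diagonal to be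
`θ/k² + (1-θ)/k`. Nonnegativity of the entries gives `θ ≥ 0` and `θ + (1-θ) k ≥ 0` for all `k`,
i.e. `θ ≤ 1`.
-/

namespace IsWeightedGraph

lemma apply_le_one {n : ℕ} {G : Fin n → Fin n → ℝ} (hG : IsWeightedGraph G) (i j : Fin n) :
    G i j ≤ 1 :=
  calc G i j ≤ ∑ v, G i v := Finset.single_le_sum (fun v _ => hG.1 i v) (Finset.mem_univ j)
    _ ≤ ∑ u, ∑ v, G u v :=
        Finset.single_le_sum (fun u _ => Finset.sum_nonneg fun v _ => hG.1 u v)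
          (Finset.mem_univ i)
    _ = 1 := hG.2

end IsWeightedGraph

lemma measurable_quotGraph {n k : ℕ} (f : Fin n → Fin k) : Measurable (quotGraph f) := by
  refine measurable_pi_lambda _ fun i => measurable_pi_lambda _ fun j =>
    Finset.measurable_sum _ fun u _ => Finset.measurable_sum _ fun v _ => ?_
  split_ifs <;> fun_prop

def meanGraph {k : ℕ} (ν : Measure (Fin k → Fin k → ℝ)) : Fin k → Fin k → ℝ :=
  fun i j => ∫ X, X i j ∂ν

section Mean

variable {k : ℕ} {ν : Measure (Fin k → Fin k → ℝ)}

lemma integrable_apply_of_ae_isWeightedGraph [IsFiniteMeasure ν]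
    (hν : ∀ᵐ X ∂ν, IsWeightedGraph X) (i j : Fin k) : Integrable (fun X => X i j) ν := by
  refine Integrable.mono' (integrable_const 1)
    (continuous_apply_apply i j).aestronglyMeasurable ?_
  filter_upwards [hν] with X hX
  rw [Real.norm_eq_abs, abs_of_nonneg (hX.1 i j)]
  exact hX.apply_le_one i j

lemma isWeightedGraph_meanGraph [IsProbabilityMeasure ν] (hν : ∀ᵐ X ∂ν, IsWeightedGraph X) :
    IsWeightedGraph (meanGraph ν) := by
  have hint := integrable_apply_of_ae_isWeightedGraph hν
  refine ⟨fun i j => integral_nonneg_of_ae ?_, ?_⟩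
  · filter_upwards [hν] with X hX using hX.1 i j
  · calc ∑ i, ∑ j, meanGraph ν i j = ∫ X, ∑ i, ∑ j, X i j ∂ν := by
          rw [integral_finsetSum _ fun i _ => integrable_finsetSum _ fun j _ => hint i j]
          exact Finset.sum_congr rfl fun i _ => (integral_finsetSum _ fun j _ => hint i j).symm
      _ = ∫ _, (1 : ℝ) ∂ν := integral_congr_ae (by filter_upwards [hν] with X hX using hX.2)
      _ = 1 := by simp

lemma meanGraph_map_quotGraph {n : ℕ} [IsFiniteMeasure ν] (hν : ∀ᵐ X ∂ν, IsWeightedGraph X)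
    (f : Fin k → Fin n) : meanGraph (ν.map (quotGraph f)) = quotGraph f (meanGraph ν) := by
  have hint := integrable_apply_of_ae_isWeightedGraph hν
  have hint_ite : ∀ (p : Prop) [Decidable p] (u v : Fin k),
      Integrable (fun X : Fin k → Fin k → ℝ => if p then X u v else 0) ν := fun p _ u v => by
    split_ifs
    exacts [hint u v, integrable_zero _ _ _]
  ext i j
  rw [meanGraph, integral_map (measurable_quotGraph f).aemeasurable
    (continuous_apply_apply i j).aestronglyMeasurable]
  simp only [quotGraph, meanGraph]
  rw [integral_finsetSum _ fun u _ => integrable_finsetSum _ fun v _ => hint_ite _ u v]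
  refine Finset.sum_congr rfl fun u _ => ?_
  rw [integral_finsetSum _ fun v _ => hint_ite _ u v]
  refine Finset.sum_congr rfl fun v _ => ?_
  split_ifs <;> simp

end Mean

def IsQuotientConsistent (M : ∀ k : ℕ, Fin k → Fin k → ℝ) : Prop :=
  ∀ n k : ℕ, 1 ≤ n → 1 ≤ k → ∀ d : Fin (n * k) → Fin k, IsEquipartition d →
    quotGraph d (M (n * k)) = M k

lemma EquipartitionConsistentModel.isQuotientConsistent_meanGraph
    {μ : ∀ k : ℕ, Measure (Fin k → Fin k → ℝ)}
    (hcons : EquipartitionConsistentModel μ) (hprob : ∀ k, 1 ≤ k → IsProbabilityMeasure (μ k))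
    (hsupp : ∀ k, 1 ≤ k → ∀ᵐ X ∂(μ k), IsWeightedGraph X) :
    IsQuotientConsistent fun k => meanGraph (μ k) := by
  intro n k hn hk d hd
  show quotGraph d (meanGraph (μ (n * k))) = meanGraph (μ k)
  have hnk : 1 ≤ n * k := Nat.one_le_iff_ne_zero.mpr (by positivity)
  have := hprob (n * k) hnk
  rw [← hcons n k hn hk d hd, meanGraph_map_quotGraph (hsupp _ hnk)]

lemma quotGraph_equiv {n k : ℕ} (e : Fin n ≃ Fin k) (G : Fin n → Fin n → ℝ) (i j : Fin k) :
    quotGraph e G i j = G (e.symm i) (e.symm j) := by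
  simp only [quotGraph, ← e.eq_symm_apply, ite_and]
  simp [Finset.sum_ite_eq']

lemma isEquipartition_equiv {k : ℕ} (e : Fin (1 * k) ≃ Fin k) : IsEquipartition e := by
  intro i
  rw [Finset.card_eq_one]
  exact ⟨e.symm i, by ext u; simp [← e.eq_symm_apply]⟩

/-- The equipartition of `[n] × [k] ≅ [nk]` onto its second factor. -/
def blockMap (n k : ℕ) : Fin (n * k) → Fin k := fun u => (finProdFinEquiv.symm u).2

lemma sum_ite_blockMap_eq {β : Type*} [AddCommMonoid β] {n k : ℕ} (g : Fin (n * k) → β) (i : Fin k) :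
    (∑ u, if blockMap n k u = i then g u else 0) = ∑ a : Fin n, g (finProdFinEquiv (a, i)) := by
  rw [← finProdFinEquiv.sum_comp, Fintype.sum_prod_type]
  simp [blockMap, Finset.sum_ite_eq']

lemma isEquipartition_blockMap (n k : ℕ) : IsEquipartition (blockMap n k) := by
  intro i
  rw [Finset.card_filter, sum_ite_blockMap_eq]
  simp

lemma quotGraph_blockMap {n k : ℕ} (G : Fin (n * k) → Fin (n * k) → ℝ) (i j : Fin k) :
    quotGraph (blockMap n k) G i j =
      ∑ a : Fin n, ∑ b : Fin n, G (finProdFinEquiv (a, i)) (finProdFinEquiv (b, j)) := by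
  simp only [quotGraph, ite_and, Finset.sum_ite_irrel, Finset.sum_const_zero]
  rw [sum_ite_blockMap_eq]
  exact Finset.sum_congr rfl fun a _ => sum_ite_blockMap_eq _ j

lemma Equiv.Perm.exists_apply_eq_and_apply_eq {α : Type*} [DecidableEq α] {i j i' j' : α}
    (hij : i ≠ j) (hij' : i' ≠ j') : ∃ σ : Equiv.Perm α, σ i = i' ∧ σ j = j' := by
  set σ₁ := Equiv.swap i i'
  have hσ₁ : σ₁ i = i' := Equiv.swap_apply_left i i'
  have hne : i' ≠ σ₁ j := hσ₁ ▸ σ₁.injective.ne hij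
  exact ⟨σ₁.trans (Equiv.swap (σ₁ j) j'),
    by simp [hσ₁, Equiv.swap_apply_of_ne_of_ne hne hij'], by simp⟩

/-- Junk value `0` for `k < 2`, where there are no off-diagonal entries. -/
def offDiagValue (M : ∀ k : ℕ, Fin k → Fin k → ℝ) (k : ℕ) : ℝ :=
  if h : 2 ≤ k then M k ⟨0, by omega⟩ ⟨1, h⟩ else 0

lemma le_one_of_forall_nat_nonneg {θ : ℝ} (h : ∀ k : ℕ, 1 ≤ k → 0 ≤ θ + (1 - θ) * k) :
    θ ≤ 1 := by
  by_contra! hθ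
  obtain ⟨k, hk⟩ := exists_nat_gt (θ / (θ - 1))
  have hk₁ : 1 ≤ k := by
    have : (0 : ℝ) < k := lt_trans (div_pos (by linarith) (by linarith)) hk
    exact_mod_cast this
  have : θ < k * (θ - 1) := (div_lt_iff₀ (by linarith)).mp hk
  linarith [h k hk₁]

namespace IsQuotientConsistent

variable {M : ∀ k : ℕ, Fin k → Fin k → ℝ} (hM : IsQuotientConsistent M)
include hM

lemma apply_perm {k : ℕ} (σ : Equiv.Perm (Fin k)) (i j : Fin k) :
    M k (σ i) (σ j) = M k i j := by
  have hk : 1 ≤ k := i.pos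
  have key : ∀ (e : Fin (1 * k) ≃ Fin k) (i j : Fin k),
      M k i j = M (1 * k) (e.symm i) (e.symm j) := fun e i j => by
    rw [← hM 1 k le_rfl hk e (isEquipartition_equiv e), quotGraph_equiv]
  rw [key ((finCongr (one_mul k)).trans σ), key (finCongr (one_mul k))]
  simp

lemma apply_self_eq {k : ℕ} (i i' : Fin k) : M k i i = M k i' i' := by
  simpa using (hM.apply_perm (Equiv.swap i i') i i).symm

lemma apply_eq_offDiagValue {k : ℕ} {i j : Fin k} (hij : i ≠ j) :
    M k i j = offDiagValue M k := by
  have hk : 2 ≤ k := by have := i.isLt; have := j.isLt; omega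
  obtain ⟨σ, hσi, hσj⟩ := Equiv.Perm.exists_apply_eq_and_apply_eq hij
    (show (⟨0, by omega⟩ : Fin k) ≠ ⟨1, hk⟩ by simp)
  rw [offDiagValue, dif_pos hk, ← hσi, ← hσj, hM.apply_perm]

lemma offDiagValue_eq_sq_mul {n k : ℕ} (hn : 1 ≤ n) (hk : 2 ≤ k) :
    offDiagValue M k = n ^ 2 * offDiagValue M (n * k) := by
  have h01 : (⟨0, by omega⟩ : Fin k) ≠ ⟨1, hk⟩ := by simp
  rw [← hM.apply_eq_offDiagValue h01, ← hM n k hn (by omega) _ (isEquipartition_blockMap n k),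
    quotGraph_blockMap]
  have hblock : ∀ a b : Fin n, finProdFinEquiv (a, (⟨0, by omega⟩ : Fin k)) ≠
      finProdFinEquiv (b, ⟨1, hk⟩) := fun a b h =>
    h01 (congrArg Prod.snd (finProdFinEquiv.injective h))
  simp only [hM.apply_eq_offDiagValue (hblock _ _), Finset.sum_const, Finset.card_univ,
    Fintype.card_fin, nsmul_eq_mul]
  ring

/-- This common value is the `θ` of the theorem. -/
lemma sq_mul_offDiagValue {k : ℕ} (hk : 2 ≤ k) :
    (k : ℝ) ^ 2 * offDiagValue M k = 2 ^ 2 * offDiagValue M 2 := by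
  rw [hM.offDiagValue_eq_sq_mul (n := 2) one_le_two hk, hM.offDiagValue_eq_sq_mul (n := k) (by omega)
    le_rfl, mul_comm k 2]
  push_cast
  ring

lemma apply_of_ne {k : ℕ} {i j : Fin k} (hij : i ≠ j) :
    M k i j = 2 ^ 2 * offDiagValue M 2 / (k : ℝ) ^ 2 := by
  have hk : 2 ≤ k := by have := i.isLt; have := j.isLt; omega
  rw [← hM.sq_mul_offDiagValue hk, hM.apply_eq_offDiagValue hij]
  field_simp

/-- The diagonal is forced by the off-diagonal entries, since `M k` has total mass one. -/
lemma apply_self {k : ℕ} (hW : IsWeightedGraph (M k)) (i : Fin k) :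
    M k i i = 2 ^ 2 * offDiagValue M 2 / (k : ℝ) ^ 2 + (1 - 2 ^ 2 * offDiagValue M 2) / k := by
  set θ := 2 ^ 2 * offDiagValue M 2
  have hk : (k : ℝ) ≠ 0 := Nat.cast_ne_zero.mpr (Fin.pos i).ne'
  have hrow : ∀ u : Fin k, ∑ v, M k u v = M k i i + (k - 1) * (θ / k ^ 2) := fun u => by
    rw [← Finset.add_sum_erase _ _ (Finset.mem_univ u), hM.apply_self_eq u i,
      Finset.sum_congr rfl fun v hv => hM.apply_of_ne (Finset.ne_of_mem_erase hv).symm]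
    simp [Finset.card_erase_of_mem, Nat.cast_sub (Fin.pos i), θ]
  have hmass := hW.2
  simp only [hrow, Finset.sum_const, Finset.card_univ, Fintype.card_fin, nsmul_eq_mul] at hmass
  field_simp at hmass ⊢
  linarith

lemma exists_apply_eq (hW : ∀ k, 1 ≤ k → IsWeightedGraph (M k)) :
    ∃ θ : ℝ, θ ∈ Set.Icc (0 : ℝ) 1 ∧ ∀ k, 1 ≤ k → ∀ i j : Fin k,
      M k i j = θ * (1 / (k : ℝ) ^ 2) + (1 - θ) * (if i = j then 1 / (k : ℝ) else 0) := by
  set θ := 2 ^ 2 * offDiagValue M 2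
  have hθ₀ : 0 ≤ θ := by
    have h := (hW 2 one_le_two).1 0 1
    rw [hM.apply_eq_offDiagValue (by decide : (0 : Fin 2) ≠ 1)] at h
    positivity
  have hθ₁ : θ ≤ 1 := le_one_of_forall_nat_nonneg fun k hk => by
    have hk₀ : (k : ℝ) ≠ 0 := by positivity
    have h := (hW k hk).1 ⟨0, hk⟩ ⟨0, hk⟩
    rw [hM.apply_self (hW k hk)] at h
    have e : θ + (1 - θ) * k = (θ / k ^ 2 + (1 - θ) / k) * k ^ 2 := by field_simp
    rw [e]
    exact mul_nonneg h (sq_nonneg _)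
  refine ⟨θ, ⟨hθ₀, hθ₁⟩, fun k hk i j => ?_⟩
  split_ifs with hij
  · subst hij
    rw [hM.apply_self (hW k hk)]
    ring
  · rw [hM.apply_of_ne hij]
    ring

end IsQuotientConsistent

/-- the entrywise mean of any equipartition-consistent random graph model is
`θ·k⁻²·𝟙_{k×k} + (1−θ)·k⁻¹·I_k` for a single `θ ∈ [0,1]` independent of `k`. -/
theorem stmt18 (μ : ∀ k : ℕ, Measure (Fin k → Fin k → ℝ))
    (hprob : ∀ k, 1 ≤ k → IsProbabilityMeasure (μ k))
    (hsupp : ∀ k, 1 ≤ k → ∀ᵐ X ∂(μ k), IsWeightedGraph X)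
    (hcons : EquipartitionConsistentModel μ) :
    ∃ θ : ℝ, θ ∈ Set.Icc (0 : ℝ) 1 ∧ ∀ k, 1 ≤ k → ∀ i j : Fin k,
      ∫ X, X i j ∂(μ k) =
        θ * (1 / (k : ℝ) ^ 2) + (1 - θ) * (if i = j then 1 / (k : ℝ) else 0) :=
  (hcons.isQuotientConsistent_meanGraph hprob hsupp).exists_apply_eq fun k hk =>
    have := hprob k hk
    isWeightedGraph_meanGraph (hsupp k hk)
end
end

section
/- Let E ∈ ℝ_{≥0}^{ℕ×ℕ} with Σ_{i,j∈ℕ} E_{i,j} = 1, and let (G_n ∈ Δ^{n×n})_{n∈ℕ} be a sequence of weighted graphs, each viewed as an element of ℝ^{ℕ×ℕ} by zero-padding. Suppose there are permutations π_n of [n] (acting on matrices by (π_n G)_{i,j} = G_{π_n⁻¹(i),π_n⁻¹(j)}) such that Σ_{i,j∈ℕ} |(π_n G_n)_{i,j} − E_{i,j}| → 0 as n → ∞. Then (G_n) quotient-converges, and for every k ∈ ℕ the laws of the random quotients ρ(F_{k,n})G_n converge weakly to the law of the random matrix L_k with entries (L_k)_{a,b} = Σ_{i,j∈ℕ} E_{i,j}·1[T_i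 ∈ I_a^{(k)}]·1[T_j ∈ I_b^{(k)}], where (T_i)_{i∈ℕ} are i.i.d. uniform on [0,1] and I_a^{(k)} = [(a−1)/k, a/k) for a ∈ [k]. -/
open MeasureTheory Filter Topology BoundedContinuousFunction
open scoped ENNReal NNReal

noncomputable section

/-- The uniform measure `λ` on `[0,1]` (as a measure on `ℝ`). -/
def unif : Measure ℝ := volume.restrict (Set.Icc 0 1)

/-- `P` is the joint law of an i.i.d. sequence of uniform random variables on `[0,1]`. -/
def IsIidUniform (P : Measure (ℕ → ℝ)) : Prop :=
  IsProbabilityMeasure P ∧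
  ∀ (s : Finset ℕ) (B : ℕ → Set ℝ), (∀ i, MeasurableSet (B i)) →
    P {T | ∀ i ∈ s, T i ∈ B i} = ∏ i ∈ s, unif (B i)

/-- The grid interval `I_a^{(k)}`. -/
def gridIv (k : ℕ) (a : Fin k) : Set ℝ := Set.Ico ((a : ℝ) / k) (((a : ℝ) + 1) / k)

/-- The graph `G_n ∈ Δ^{(n+1)×(n+1)}` relabeled by the permutation `π` and zero-padded to an
infinite array. -/
def permPad {n : ℕ} (π : Equiv.Perm (Fin (n + 1))) (G : Fin (n + 1) → Fin (n + 1) → ℝ)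
    (i j : ℕ) : ℝ :=
  if h : i < n + 1 ∧ j < n + 1 then G (π⁻¹ ⟨i, h.1⟩) (π⁻¹ ⟨j, h.2⟩) else 0

/-! Colour each vertex `i` by the cell of the grid `I^{(k)}` containing an independent uniform
point `T i`. Summing the entries of a (padded) graph over pairs of colours gives a random `k × k`
matrix `gridQuotient G k T`; for a finite graph, relabeled by any permutation, the colouring is
uniform among all maps to `[k]`, so this matrix has exactly the law of the random quotient.
Since each entry of `gridQuotient` is a sum of the graph's entries with weights in `[0, 1]`, it
is `1`-Lipschitz for the entrywise `ℓ¹` distance, so `ℓ¹`-convergence of the relabeled graphs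
to `E` gives pointwise, hence almost sure, convergence of these matrices, and thus weak
convergence of their laws. -/

theorem measurable_tsum_of_summable {α ι : Type*} [MeasurableSpace α] [Countable ι]
    {f : ι → α → ℝ} (hf : ∀ i, Measurable (f i)) (hs : ∀ x, Summable fun i => f i x) :
    Measurable fun x => ∑' i, f i x :=
  measurable_of_tendsto_metrizable' atTop (fun s => Finset.measurable_sum s fun i _ => hf i)
    (tendsto_pi_nhds.2 fun x => (hs x).hasSum)

theorem Summable.mul_of_abs_le_one {ι : Type*} {f w : ι → ℝ} (hf : Summable f)
    (hw : ∀ i, |w i| ≤ 1) : Summable fun i => f i * w i :=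
  Summable.of_norm_bounded hf.abs fun i => by
    simpa [abs_mul] using mul_le_of_le_one_right (abs_nonneg (f i)) (hw i)

theorem abs_tsum_mul_sub_tsum_mul_le {ι : Type*} {e f w : ι → ℝ} (he : Summable e)
    (hf : Summable f) (hw : ∀ i, |w i| ≤ 1) :
    |∑' i, f i * w i - ∑' i, e i * w i| ≤ ∑' i, |f i - e i| := by
  rw [← (hf.mul_of_abs_le_one hw).tsum_sub (he.mul_of_abs_le_one hw), ← Real.norm_eq_abs]
  simp_rw [← sub_mul]
  refine tsum_of_norm_bounded (hf.sub he).abs.hasSum fun i => ?_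
  rw [Real.norm_eq_abs, abs_mul]
  exact mul_le_of_le_one_right (abs_nonneg _) (hw i)

theorem abs_indicator_one_mul_indicator_one_le_one {α : Type*} (s t : Set α) (x y : α) :
    |s.indicator (fun _ => (1 : ℝ)) x * t.indicator (fun _ => (1 : ℝ)) y| ≤ 1 := by
  by_cases hx : x ∈ s <;> by_cases hy : y ∈ t <;> simp [hx, hy]

section Grid

variable {k : ℕ}

theorem gridIv_subset_Icc (a : Fin k) : gridIv k a ⊆ Set.Icc 0 1 := by
  have hk : (0 : ℝ) < k := by exact_mod_cast a.pos
  rintro x ⟨hax, hxa⟩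
  refine ⟨le_trans (by positivity) hax, hxa.le.trans ?_⟩
  rw [div_le_one hk]
  exact_mod_cast a.isLt

theorem eq_of_mem_gridIv {x : ℝ} {a b : Fin k} (ha : x ∈ gridIv k a) (hb : x ∈ gridIv k b) :
    a = b := by
  have hk : (0 : ℝ) < k := by exact_mod_cast a.pos
  obtain ⟨ha₁, ha₂⟩ := ha
  obtain ⟨hb₁, hb₂⟩ := hb
  have hab : (a : ℝ) < b + 1 := by
    simpa [div_lt_div_iff_of_pos_right hk] using ha₁.trans_lt hb₂
  have hba : (b : ℝ) < a + 1 := by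
    simpa [div_lt_div_iff_of_pos_right hk] using hb₁.trans_lt ha₂
  have hab' : (a : ℕ) < b + 1 := by exact_mod_cast hab
  have hba' : (b : ℕ) < a + 1 := by exact_mod_cast hba
  ext
  omega

theorem exists_mem_gridIv (hk : 0 < k) {x : ℝ} (hx : x ∈ Set.Ico (0 : ℝ) 1) :
    ∃ a : Fin k, x ∈ gridIv k a := by
  have hkR : (0 : ℝ) < k := by exact_mod_cast hk
  have hxk : 0 ≤ x * k := mul_nonneg hx.1 hkR.le
  have hfloor : ⌊x * k⌋₊ < k := by
    rw [Nat.floor_lt hxk]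
    nlinarith [hx.2]
  refine ⟨⟨⌊x * k⌋₊, hfloor⟩, ?_, ?_⟩
  · simpa [div_le_iff₀ hkR] using Nat.floor_le hxk
  · simpa [lt_div_iff₀ hkR] using Nat.lt_floor_add_one (x * k)

theorem unif_gridIv (a : Fin k) : unif (gridIv k a) = (k : ℝ≥0∞)⁻¹ := by
  have hk : (0 : ℝ) < k := by exact_mod_cast a.pos
  rw [unif, Measure.restrict_apply' measurableSet_Icc,
    Set.inter_eq_self_of_subset_left (gridIv_subset_Icc a), gridIv, Real.volume_Ico,
    ← sub_div, add_sub_cancel_left, one_div, ENNReal.ofReal_inv_of_pos hk,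
    ENNReal.ofReal_natCast]

def gridCell (k : ℕ) {n : ℕ} (g : Fin n → Fin k) : Set (ℕ → ℝ) :=
  {T | ∀ i : Fin n, T i ∈ gridIv k (g i)}

variable {n : ℕ}

theorem measurableSet_gridCell (g : Fin n → Fin k) : MeasurableSet (gridCell k g) := by
  simp only [gridCell, Set.ofPred_forall]
  exact MeasurableSet.iInter fun i => measurable_pi_apply (i : ℕ) measurableSet_Ico

theorem pairwise_disjoint_gridCell :
    Pairwise fun g h : Fin n → Fin k => Disjoint (gridCell k g) (gridCell k h) :=
  fun _ _ hgh => Set.disjoint_left.2 fun _ hg hh =>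
    hgh (funext fun i => eq_of_mem_gridIv (hg i) (hh i))

end Grid

namespace IsIidUniform

variable {P : Measure (ℕ → ℝ)} (hP : IsIidUniform P)
include hP

theorem ae_mem_Ico : ∀ᵐ T ∂P, ∀ i, T i ∈ Set.Ico (0 : ℝ) 1 := by
  have := hP.1
  refine ae_all_iff.2 fun i => ?_
  rw [ae_iff_measure_eq (measurable_pi_apply i measurableSet_Ico).nullMeasurableSet,
    measure_univ]
  have h := hP.2 {i} (fun _ => Set.Ico 0 1) fun _ => measurableSet_Ico
  simp only [Finset.mem_singleton, forall_eq, Finset.prod_singleton] at h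
  rw [h, unif, Measure.restrict_apply measurableSet_Ico,
    Set.inter_eq_self_of_subset_left Set.Ico_subset_Icc_self, Real.volume_Ico]
  simp

theorem ae_mem_iUnion_gridCell {k : ℕ} (hk : 0 < k) (n : ℕ) :
    ∀ᵐ T ∂P, T ∈ ⋃ g : Fin n → Fin k, gridCell k g := by
  filter_upwards [hP.ae_mem_Ico] with T hT
  choose g hg using fun i : Fin n => exists_mem_gridIv hk (hT i)
  exact Set.mem_iUnion.2 ⟨g, hg⟩

theorem measure_gridCell {k n : ℕ} (g : Fin n → Fin k) :
    P (gridCell k g) = ((k : ℝ≥0∞) ^ n)⁻¹ := by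
  let B : ℕ → Set ℝ := fun i => if h : i < n then gridIv k (g ⟨i, h⟩) else Set.univ
  have hB : ∀ i : Fin n, B i = gridIv k (g i) := fun i => by simp [B]
  have hcell : {T : ℕ → ℝ | ∀ i ∈ Finset.range n, T i ∈ B i} = gridCell k g := by
    ext T
    simp only [Finset.mem_range, gridCell, Set.mem_ofPred_eq, ← hB]
    exact ⟨fun h i => h i i.isLt, fun h i hi => h ⟨i, hi⟩⟩
  have hBm : ∀ i, MeasurableSet (B i) := fun i => by
    by_cases h : i < n <;> simp [B, h, gridIv, measurableSet_Ico]
  rw [← hcell, hP.2 _ B hBm, Finset.prod_range]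
  simp [hB, unif_gridIv, ENNReal.inv_pow]

theorem lintegral_eq_sum_of_forall_mem_gridCell {k n : ℕ} (hk : 0 < k) {φ : (ℕ → ℝ) → ℝ≥0∞}
    {c : (Fin n → Fin k) → ℝ≥0∞} (hφ : ∀ g, ∀ T ∈ gridCell k g, φ T = c g) :
    ∫⁻ T, φ T ∂P = ((k : ℝ≥0∞) ^ n)⁻¹ * ∑ g, c g := by
  rw [← Measure.restrict_eq_self_of_ae_mem (hP.ae_mem_iUnion_gridCell hk n),
    lintegral_iUnion measurableSet_gridCell pairwise_disjoint_gridCell, tsum_fintype,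
    Finset.mul_sum]
  refine Finset.sum_congr rfl fun g _ => ?_
  rw [setLIntegral_congr_fun (measurableSet_gridCell g) (hφ g), setLIntegral_const,
    hP.measure_gridCell, mul_comm]

end IsIidUniform

theorem lintegral_quotientLaw {n k : ℕ} (G : Fin n → Fin n → ℝ)
    (φ : (Fin k → Fin k → ℝ) → ℝ≥0∞) :
    ∫⁻ x, φ x ∂quotientLaw G k = ((k : ℝ≥0∞) ^ n)⁻¹ * ∑ f : Fin n → Fin k, φ (quotGraph f G) := by
  simp [quotientLaw, lintegral_finsetSum_measure, lintegral_dirac]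

section permPad

variable {n : ℕ} (π : Equiv.Perm (Fin (n + 1))) (G : Fin (n + 1) → Fin (n + 1) → ℝ)

theorem permPad_val (i j : Fin (n + 1)) : permPad π G i j = G (π⁻¹ i) (π⁻¹ j) := by
  simp [permPad, i.isLt, j.isLt]

theorem permPad_eq_zero {i j : ℕ} (h : ¬(i < n + 1 ∧ j < n + 1)) : permPad π G i j = 0 :=
  dif_neg h

theorem summable_permPad : Summable fun p : ℕ × ℕ => permPad π G p.1 p.2 :=
  summable_of_ne_finset_zero (s := Finset.range (n + 1) ×ˢ Finset.range (n + 1)) fun p hp =>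
    permPad_eq_zero π G (by simpa using hp)

theorem tsum_permPad_mul (w : ℕ → ℕ → ℝ) :
    ∑' p : ℕ × ℕ, permPad π G p.1 p.2 * w p.1 p.2 = ∑ u, ∑ v, G u v * w (π u) (π v) := by
  rw [tsum_eq_sum (s := Finset.range (n + 1) ×ˢ Finset.range (n + 1)) fun p hp => by
      rw [permPad_eq_zero π G (by simpa using hp), zero_mul],
    Finset.sum_product, Finset.sum_range, ← Equiv.sum_comp π]
  refine Finset.sum_congr rfl fun u _ => ?_
  rw [Finset.sum_range, ← Equiv.sum_comp π]
  simp [permPad_val]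

end permPad

/-- The matrix `L_k` of the theorem, for an arbitrary array `E` and sample `T`. -/
def gridQuotient (E : ℕ → ℕ → ℝ) (k : ℕ) (T : ℕ → ℝ) : Fin k → Fin k → ℝ :=
  fun a b => ∑' p : ℕ × ℕ, E p.1 p.2 *
    Set.indicator (gridIv k a) (fun _ => (1 : ℝ)) (T p.1) *
    Set.indicator (gridIv k b) (fun _ => (1 : ℝ)) (T p.2)

section gridQuotient

variable {k : ℕ}

theorem gridQuotient_apply (E : ℕ → ℕ → ℝ) (T : ℕ → ℝ) (a b : Fin k) :
    gridQuotient E k T a b = ∑' p : ℕ × ℕ, E p.1 p.2 *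
      ((gridIv k a).indicator (fun _ => (1 : ℝ)) (T p.1) *
        (gridIv k b).indicator (fun _ => (1 : ℝ)) (T p.2)) := by
  simp only [gridQuotient, mul_assoc]

theorem abs_gridQuotient_sub_le {E F : ℕ → ℕ → ℝ} (hE : Summable fun p : ℕ × ℕ => E p.1 p.2)
    (hF : Summable fun p : ℕ × ℕ => F p.1 p.2) (T : ℕ → ℝ) (a b : Fin k) :
    |gridQuotient F k T a b - gridQuotient E k T a b| ≤ ∑' p : ℕ × ℕ, |F p.1 p.2 - E p.1 p.2| := by
  simp only [gridQuotient_apply]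
  exact abs_tsum_mul_sub_tsum_mul_le hE hF fun p =>
    abs_indicator_one_mul_indicator_one_le_one _ _ _ _

theorem measurable_gridQuotient {E : ℕ → ℕ → ℝ} (hE : Summable fun p : ℕ × ℕ => E p.1 p.2) :
    Measurable (gridQuotient E k) := by
  refine measurable_pi_lambda _ fun a => measurable_pi_lambda _ fun b => ?_
  simp only [gridQuotient_apply]
  refine measurable_tsum_of_summable (fun p => ?_) fun T => hE.mul_of_abs_le_one fun p =>
    abs_indicator_one_mul_indicator_one_le_one _ _ _ _
  exact measurable_const.mul <|
    ((measurable_const.indicator measurableSet_Ico).comp (measurable_pi_apply p.1)).mul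
      ((measurable_const.indicator measurableSet_Ico).comp (measurable_pi_apply p.2))

theorem tendsto_gridQuotient {E : ℕ → ℕ → ℝ} {F : ℕ → ℕ → ℕ → ℝ}
    (hE : Summable fun p : ℕ × ℕ => E p.1 p.2) (hF : ∀ n, Summable fun p : ℕ × ℕ => F n p.1 p.2)
    (hFE : Tendsto (fun n => ∑' p : ℕ × ℕ, |F n p.1 p.2 - E p.1 p.2|) atTop (𝓝 0))
    (T : ℕ → ℝ) :
    Tendsto (fun n => gridQuotient (F n) k T) atTop (𝓝 (gridQuotient E k T)) := by
  refine tendsto_pi_nhds.2 fun a => tendsto_pi_nhds.2 fun b => ?_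
  rw [tendsto_iff_norm_sub_tendsto_zero]
  exact squeeze_zero (fun n => norm_nonneg _)
    (fun n => abs_gridQuotient_sub_le hE (hF n) T a b) hFE

theorem gridQuotient_permPad_of_mem_gridCell {n : ℕ} (π : Equiv.Perm (Fin (n + 1)))
    (G : Fin (n + 1) → Fin (n + 1) → ℝ) {g : Fin (n + 1) → Fin k} {T : ℕ → ℝ}
    (hT : T ∈ gridCell k g) : gridQuotient (permPad π G) k T = quotGraph (g ∘ π) G := by
  have hind : ∀ (u : Fin (n + 1)) (a : Fin k),
      (gridIv k a).indicator (fun _ => (1 : ℝ)) (T u) = if g u = a then 1 else 0 := by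
    intro u a
    by_cases h : g u = a
    · simp [h, Set.indicator_of_mem (h ▸ hT u)]
    · simp [h, Set.indicator_of_notMem fun hu => h (eq_of_mem_gridIv (hT u) hu)]
  ext a b
  rw [gridQuotient_apply, tsum_permPad_mul π G fun i j =>
    (gridIv k a).indicator (fun _ => (1 : ℝ)) (T i) *
      (gridIv k b).indicator (fun _ => (1 : ℝ)) (T j)]
  simp only [hind, quotGraph, Function.comp_apply]
  refine Finset.sum_congr rfl fun u _ => Finset.sum_congr rfl fun v _ => ?_
  split_ifs <;> simp_all

end gridQuotient

theorem IsIidUniform.map_gridQuotient_permPad {P : Measure (ℕ → ℝ)} (hP : IsIidUniform P)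
    {k n : ℕ} (hk : 0 < k) (π : Equiv.Perm (Fin (n + 1))) (G : Fin (n + 1) → Fin (n + 1) → ℝ) :
    P.map (gridQuotient (permPad π G) k) = quotientLaw G k := by
  refine Measure.ext_of_lintegral _ fun φ hφ => ?_
  rw [lintegral_map hφ (measurable_gridQuotient (summable_permPad π G)),
    hP.lintegral_eq_sum_of_forall_mem_gridCell hk fun g T hT => by
      rw [gridQuotient_permPad_of_mem_gridCell π G hT],
    lintegral_quotientLaw]
  congr 1
  exact Equiv.sum_comp (π.symm.arrowCongr (Equiv.refl _)) fun f => φ (quotGraph f G)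

theorem stmt19_general (E : ℕ → ℕ → ℝ)
    (hEsum : HasSum (fun p : ℕ × ℕ => E p.1 p.2) 1)
    (G : ∀ n : ℕ, Fin (n + 1) → Fin (n + 1) → ℝ)
    (π : ∀ n : ℕ, Equiv.Perm (Fin (n + 1)))
    (hTV : Tendsto
      (fun n => ∑' p : ℕ × ℕ, |permPad (π n) (G n) p.1 p.2 - E p.1 p.2|)
      atTop (𝓝 0))
    (P : Measure (ℕ → ℝ)) (hP : IsIidUniform P) :
    QuotientConverges G ∧
    ∀ k : ℕ, 1 ≤ k → ∀ f : (Fin k → Fin k → ℝ) →ᵇ ℝ,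
      Tendsto (fun n => ∫ x, f x ∂(quotientLaw (G n) k)) atTop
        (𝓝 (∫ x, f x ∂(Measure.map
          (fun T : ℕ → ℝ => fun a b : Fin k =>
            ∑' p : ℕ × ℕ, E p.1 p.2 *
              Set.indicator (gridIv k a) (fun _ => (1 : ℝ)) (T p.1) *
              Set.indicator (gridIv k b) (fun _ => (1 : ℝ)) (T p.2)) P))) := by
  have := hP.1
  have hE := hEsum.summable
  have hlaw : ∀ k, 1 ≤ k → ∀ f : (Fin k → Fin k → ℝ) →ᵇ ℝ,
      Tendsto (fun n => ∫ x, f x ∂quotientLaw (G n) k) atTop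
        (𝓝 (∫ x, f x ∂P.map (gridQuotient E k))) := by
    intro k hk
    have hconv := tendstoInDistribution_of_ae_tendsto (μ' := P) (l := atTop)
      (fun n => (measurable_gridQuotient (summable_permPad (π n) (G n))).aemeasurable)
      (measurable_gridQuotient hE).aemeasurable
      (ae_of_all _ (tendsto_gridQuotient (k := k) hE (fun n => summable_permPad (π n) (G n)) hTV))
    simpa only [hP.map_gridQuotient_permPad hk, ProbabilityMeasure.coe_mk] using
      ProbabilityMeasure.tendsto_iff_forall_integral_tendsto.1 hconv.tendsto
  exact ⟨fun k hk => ⟨_, Measure.isProbabilityMeasure_map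
    (measurable_gridQuotient hE).aemeasurable, hlaw k hk⟩, hlaw⟩

/-- if (after relabeling and zero-padding) the graphs `G_n` converge in
entrywise `ℓ₁` to a summable array `E` of total mass one, then `(G_n)` quotient-converges, and
for every `k` the random quotients converge weakly to the law of the matrix
`L_{a,b} = Σ_{i,j} E_{i,j} 1[T_i ∈ I_a^{(k)}] 1[T_j ∈ I_b^{(k)}]` with `(T_i)` i.i.d.
uniform on `[0,1]`. -/
theorem stmt19 (E : ℕ → ℕ → ℝ) (hEpos : ∀ i j, 0 ≤ E i j)
    (hEsum : HasSum (fun p : ℕ × ℕ => E p.1 p.2) 1)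
    (G : ∀ n : ℕ, Fin (n + 1) → Fin (n + 1) → ℝ) (hG : ∀ n, IsWeightedGraph (G n))
    (π : ∀ n : ℕ, Equiv.Perm (Fin (n + 1)))
    (hTV : Tendsto
      (fun n => ∑' p : ℕ × ℕ, |permPad (π n) (G n) p.1 p.2 - E p.1 p.2|)
      atTop (𝓝 0))
    (P : Measure (ℕ → ℝ)) (hP : IsIidUniform P) :
    QuotientConverges G ∧
    ∀ k : ℕ, 1 ≤ k → ∀ f : (Fin k → Fin k → ℝ) →ᵇ ℝ,
      Tendsto (fun n => ∫ x, f x ∂(quotientLaw (G n) k)) atTop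
        (𝓝 (∫ x, f x ∂(Measure.map
          (fun T : ℕ → ℝ => fun a b : Fin k =>
            ∑' p : ℕ × ℕ, E p.1 p.2 *
              Set.indicator (gridIv k a) (fun _ => (1 : ℝ)) (T p.1) *
              Set.indicator (gridIv k b) (fun _ => (1 : ℝ)) (T p.2)) P))) :=
  stmt19_general E hEsum G π hTV P hP
end
end
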